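/- arXiv:1709.01706 — 2 statements merged into one kernel-verified Lean document; each statement's English description precedes it below -/
import Mathlib

section
/- Let I be a nonempty upward directed preordered set, F an ultrafilter on I containing all final sections of I, (A^i)_{i∈I} an I-indexed family of finite Σ-algebras with constant support underlying a projective system A = ((A^i), (f^{j,i})), and let A_∞ = lim← A be the projective limit. Then A_∞ is a retract of the ultraproduct ∏_{i∈I} A^i / ≡^F: there is a homomorphism h from the ultraproduct to A_∞ such that h composed with the canonical map A_∞ → ∏ A^i → ∏ A^i/≡^F is the identity on A_∞. -/
/-- The congruence `≡^F` on a product, as a sortwise setoid. -/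
def ultraSetoid {I : Type*} (F : Ultrafilter I) (A : I → Type*) :
    Setoid (∀ i, A i) where
  r a b := {i | a i = b i} ∈ (F : Filter I)
  iseqv := by
    refine ⟨fun a => ?_, fun {a b} h => ?_, fun {a b c} h1 h2 => ?_⟩
    · simp
    · exact Filter.mem_of_superset h fun i hi => (hi : a i = b i).symm
    · exact Filter.mem_of_superset (Filter.inter_mem h1 h2)
        fun i hi => (hi.1 : a i = b i).trans hi.2

/-- many-sorted Mariano–Miraglia: a profinite Σ-algebra, the
projective limit of a projective system of finite Σ-algebras with constant
support, is a retract of the ultraproduct of the family relative to an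
ultrafilter F containing all final sections: there is a homomorphism `h` from
the ultraproduct to the limit which is a left inverse of the canonical map
from the limit into the ultraproduct. -/
theorem profinite_retract_of_ultraproduct {S I : Type*} [Preorder I] [Nonempty I]
    (hdir : ∀ i j : I, ∃ k, i ≤ k ∧ j ≤ k)
    (F : Ultrafilter I) (hF : ∀ i : I, Set.Ici i ∈ F)
    (Op : Type*) (ar : Op → List S) (out : Op → S)
    (A : I → S → Type*)
    (FA : ∀ (i : I) (o : Op),
      (∀ k : Fin (ar o).length, A i ((ar o).get k)) → A i (out o))
    (hfin : ∀ i : I, Finite ((s : S) × A i s))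
    (hconst : ∀ i j : I, {s | Nonempty (A i s)} = {s | Nonempty (A j s)})
    (f : ∀ ⦃i j : I⦄, i ≤ j → ∀ s, A j s → A i s)
    (hid : ∀ (i : I) (s : S), f (le_refl i) s = id)
    (hcomp : ∀ ⦃i j k : I⦄ (hij : i ≤ j) (hjk : j ≤ k) (s : S) (x : A k s),
        f (hij.trans hjk) s x = f hij s (f hjk s x))
    (hhom : ∀ ⦃i j : I⦄ (hij : i ≤ j) (o : Op)
        (a : ∀ k : Fin (ar o).length, A j ((ar o).get k)),
        f hij (out o) (FA j o a) = FA i o (fun k => f hij _ (a k))) :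
    ∃ h : ∀ s : S, Quotient (ultraSetoid F (fun i => A i s)) →
        {x : ∀ i, A i s // ∀ ⦃i j : I⦄ (hij : i ≤ j), f hij s (x j) = x i},
      -- h is a homomorphism from the ultraproduct to the projective limit
      (∀ (o : Op) (a : ∀ k : Fin (ar o).length, ∀ i, A i ((ar o).get k)),
        (h (out o) (Quotient.mk (ultraSetoid F _)
            (fun i => FA i o (fun k => a k i)))).val =
          fun i => FA i o
            (fun k => (h ((ar o).get k) (Quotient.mk (ultraSetoid F _) (a k))).val i)) ∧
      -- h is a retraction of the canonical map limit → ultraproduct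
      ∀ (s : S) (x : {x : ∀ i, A i s // ∀ ⦃i j : I⦄ (hij : i ≤ j), f hij s (x j) = x i}),
        h s (Quotient.mk (ultraSetoid F _) x.val) = x := by
  classical
  have hfin' : ∀ (i : I) (s : S), Finite (A i s) := fun i s => by
    have := hfin i
    exact Finite.of_injective (fun x => (⟨s, x⟩ : (s : S) × A i s)) sigma_mk_injective
  have key : ∀ (s : S) (i : I) (a : ∀ j, A j s),
      ∃ b : A i s, {j | ∃ h : i ≤ j, f h s (a j) = b} ∈ F := by
    intro s i a
    have : Finite (A i s) := hfin' i s
    set φ : I → A i s := fun j => if h : i ≤ j then f h s (a j) else a i with hφ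
    obtain ⟨b, hb⟩ := (F.map φ).eq_pure_of_finite
    refine ⟨b, ?_⟩
    have h1 : {j | φ j = b} ∈ F := by
      have : {b} ∈ F.map φ := by rw [hb]; exact rfl
      exact this
    refine Filter.mem_of_superset (Filter.inter_mem h1 (hF i)) ?_
    rintro j ⟨hj1, hj2⟩
    refine ⟨hj2, ?_⟩
    simp only [Set.mem_setOf_eq, φ] at hj1
    rwa [dif_pos (show i ≤ j from hj2)] at hj1
  have uniq : ∀ (s : S) (i : I) (a : ∀ j, A j s) (b c : A i s),
      {j | ∃ h : i ≤ j, f h s (a j) = b} ∈ F →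
      {j | ∃ h : i ≤ j, f h s (a j) = c} ∈ F → b = c := by
    intro s i a b c hb hc
    obtain ⟨j, ⟨h1, e1⟩, ⟨h2, e2⟩⟩ := Ultrafilter.nonempty_of_mem (Filter.inter_mem hb hc)
    rw [← e1, ← e2]
  choose g hg using key
  have hthread : ∀ (s : S) (a : ∀ j, A j s) ⦃i j : I⦄ (hij : i ≤ j),
      f hij s (g s j a) = g s i a := by
    intro s a i j hij
    refine uniq s i a _ _ ?_ (hg s i a)
    refine Filter.mem_of_superset (hg s j a) ?_
    rintro k ⟨h1, e1⟩
    exact ⟨hij.trans h1, by rw [hcomp hij h1, e1]⟩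
  have hwd : ∀ (s : S) (a b : ∀ j, A j s), (ultraSetoid F (fun i => A i s)).r a b →
      ∀ i, g s i a = g s i b := by
    intro s a b hab i
    refine uniq s i b _ _ ?_ (hg s i b)
    refine Filter.mem_of_superset (Filter.inter_mem (hg s i a) hab) ?_
    rintro k ⟨⟨h1, e1⟩, e2⟩
    exact ⟨h1, by rw [← e2]; exact e1⟩
  refine ⟨fun s => Quotient.lift
      (fun a => (⟨fun i => g s i a, fun i j hij => hthread s a hij⟩ :
        {x : ∀ i, A i s // ∀ ⦃i j : I⦄ (hij : i ≤ j), f hij s (x j) = x i}))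
      (fun a b hab => Subtype.ext (funext (hwd s a b hab))), ?_, ?_⟩
  · intro o a
    funext i
    show g (out o) i (fun j => FA j o (fun k => a k j)) = FA i o (fun k => g _ i (a k))
    refine uniq (out o) i _ _ _ (hg (out o) i _) ?_
    have hall : (Set.Ici i ∩ ⋂ k : Fin (ar o).length,
        {j | ∃ h : i ≤ j, f h _ (a k j) = g _ i (a k)}) ∈ F :=
      Filter.inter_mem (hF i)
        ((Filter.iInter_mem).2 fun k => hg ((ar o).get k) i (a k))
    refine Filter.mem_of_superset hall ?_
    rintro j ⟨hij, hj⟩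
    simp only [Set.mem_iInter, Set.mem_setOf_eq] at hj
    refine ⟨hij, ?_⟩
    rw [hhom hij o]
    congr 1
    funext k
    obtain ⟨h', e'⟩ := hj k
    exact e'
  · intro s x
    refine Subtype.ext (funext fun i => ?_)
    show g s i x.val = x.val i
    refine uniq s i x.val _ _ (hg s i x.val) ?_
    refine Filter.mem_of_superset (hF i) fun j hj => ⟨hj, x.prop hj⟩
end

section
/- Under the hypotheses of the retraction theorem (nonempty upward directed I, ultrafilter F containing final sections, projective system of finite Σ-algebras with constant support), for each J ∈ F and i ∈ I, the assignment h^{J,i}_s sending x ∈ ∏_{j∈J} A^j_s to the unique y ∈ A^i_s with {j ∈ J ∩ ↑i | f^{j,i}_s(x_j) = y} ∈ F is well-defined (such a y exists and is unique) and the family (h^{J,i}_s)_{s∈S} is a Σ-algebra homomorphism from ∏_{j∈J} A^j to A^i. -/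
/-- in the setting of the retraction theorem, for `J ∈ F` and
`i ∈ I`, the map `h^{J,i}` sending `x` to the unique `y` with
`{j ∈ J ∩ ↑i | f^{j,i}(x_j) = y} ∈ F` is well defined and is a Σ-algebra
homomorphism from `∏_{j∈J} A^j` to `A^i`. -/
theorem hJi_well_defined_and_hom {S I : Type*} [Preorder I] [Nonempty I]
    (hdir : ∀ i j : I, ∃ k, i ≤ k ∧ j ≤ k)
    (F : Ultrafilter I) (hF : ∀ i : I, Set.Ici i ∈ F)
    (Op : Type*) (ar : Op → List S) (out : Op → S)
    (A : I → S → Type*)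
    (FA : ∀ (i : I) (o : Op),
      (∀ k : Fin (ar o).length, A i ((ar o).get k)) → A i (out o))
    (hfin : ∀ i : I, Finite ((s : S) × A i s))
    (hconst : ∀ i j : I, {s | Nonempty (A i s)} = {s | Nonempty (A j s)})
    (f : ∀ ⦃i j : I⦄, i ≤ j → ∀ s, A j s → A i s)
    (hid : ∀ (i : I) (s : S), f (le_refl i) s = id)
    (hcomp : ∀ ⦃i j k : I⦄ (hij : i ≤ j) (hjk : j ≤ k) (s : S) (x : A k s),
        f (hij.trans hjk) s x = f hij s (f hjk s x))
    (hhom : ∀ ⦃i j : I⦄ (hij : i ≤ j) (o : Op)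
        (a : ∀ k : Fin (ar o).length, A j ((ar o).get k)),
        f hij (out o) (FA j o a) = FA i o (fun k => f hij _ (a k))) :
    ∀ J ∈ (F : Filter I), ∀ i : I,
      -- well-definedness: existence and uniqueness of the value
      (∀ (s : S) (x : ∀ j : J, A j.1 s), ∃! y : A i s,
        {j : I | ∃ hj : j ∈ J, ∃ hij : i ≤ j, f hij s (x ⟨j, hj⟩) = y} ∈ F) ∧
      -- the resulting S-sorted map is a Σ-algebra homomorphism
      ∃ h : ∀ s : S, (∀ j : J, A j.1 s) → A i s,
        (∀ (s : S) (x : ∀ j : J, A j.1 s),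
          {j : I | ∃ hj : j ∈ J, ∃ hij : i ≤ j, f hij s (x ⟨j, hj⟩) = h s x} ∈ F) ∧
        ∀ (o : Op) (a : ∀ k : Fin (ar o).length, ∀ j : J, A j.1 ((ar o).get k)),
          h (out o) (fun j => FA j.1 o (fun k => a k j)) =
            FA i o (fun k => h ((ar o).get k) (a k)) := by
  intro J hJ i
  have hfin' : ∀ (i : I) (s : S), Finite (A i s) := fun i s =>
    Finite.of_injective (Sigma.mk s : A i s → (s : S) × A i s) sigma_mk_injective
  have key : ∀ (s : S) (x : ∀ j : J, A j.1 s), ∃! y : A i s,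
      {j : I | ∃ hj : j ∈ J, ∃ hij : i ≤ j, f hij s (x ⟨j, hj⟩) = y} ∈ F := by
    intro s x
    have hT : {j : I | j ∈ J ∧ i ≤ j} ∈ F := Filter.inter_mem hJ (hF i)
    have hex : ∃ y : A i s,
        {j : I | ∃ hj : j ∈ J, ∃ hij : i ≤ j, f hij s (x ⟨j, hj⟩) = y} ∈ F := by
      by_contra h
      push_neg at h
      have hc : ∀ y : A i s,
          {j : I | ∃ hj : j ∈ J, ∃ hij : i ≤ j, f hij s (x ⟨j, hj⟩) = y}ᶜ ∈ F :=
        fun y => (Ultrafilter.compl_mem_iff_notMem).2 (h y)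
      haveI := hfin' i s
      have hInt : (⋂ y : A i s,
          {j : I | ∃ hj : j ∈ J, ∃ hij : i ≤ j, f hij s (x ⟨j, hj⟩) = y}ᶜ) ∈ F :=
        (Filter.iInter_mem).2 hc
      have := Filter.inter_mem hT hInt
      rcases Filter.nonempty_of_mem this with ⟨j, ⟨hj, hij⟩, hmem⟩
      have := Set.mem_iInter.1 hmem (f hij s (x ⟨j, hj⟩))
      exact this ⟨hj, hij, rfl⟩
    rcases hex with ⟨y, hy⟩
    refine ⟨y, hy, ?_⟩
    intro y' hy'
    rcases Filter.nonempty_of_mem (Filter.inter_mem hy' hy) with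
      ⟨j, ⟨hj, hij, e1⟩, ⟨hj', hij', e2⟩⟩
    exact e1.symm.trans e2
  refine ⟨key, fun s x => (key s x).exists.choose, fun s x => (key s x).exists.choose_spec, ?_⟩
  intro o a
  set n := (ar o).length
  have hy : ∀ k : Fin n,
      {j : I | ∃ hj : j ∈ J, ∃ hij : i ≤ j,
        f hij ((ar o).get k) (a k ⟨j, hj⟩) = (key ((ar o).get k) (a k)).exists.choose} ∈ F :=
    fun k => (key ((ar o).get k) (a k)).exists.choose_spec
  have hT : {j : I | j ∈ J ∧ i ≤ j} ∈ F := Filter.inter_mem hJ (hF i)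
  have hbig : ({j : I | j ∈ J ∧ i ≤ j} ∩ ⋂ k : Fin n,
      {j : I | ∃ hj : j ∈ J, ∃ hij : i ≤ j,
        f hij ((ar o).get k) (a k ⟨j, hj⟩) = (key ((ar o).get k) (a k)).exists.choose}) ∈ F :=
    Filter.inter_mem hT ((Filter.iInter_mem).2 hy)
  have htarget : {j : I | ∃ hj : j ∈ J, ∃ hij : i ≤ j,
      f hij (out o) ((fun j : J => FA j.1 o (fun k => a k j)) ⟨j, hj⟩)
        = FA i o (fun k => (key ((ar o).get k) (a k)).exists.choose)} ∈ F := by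
    refine Filter.mem_of_superset hbig ?_
    rintro j ⟨⟨hj, hij⟩, hmem⟩
    refine ⟨hj, hij, ?_⟩
    have hk : ∀ k : Fin n,
        f hij ((ar o).get k) (a k ⟨j, hj⟩) = (key ((ar o).get k) (a k)).exists.choose := by
      intro k
      rcases Set.mem_iInter.1 hmem k with ⟨hj2, hij2, e⟩
      exact e
    calc f hij (out o) (FA j o (fun k => a k ⟨j, hj⟩))
        = FA i o (fun k => f hij _ (a k ⟨j, hj⟩)) := hhom hij o _
      _ = FA i o (fun k => (key ((ar o).get k) (a k)).exists.choose) := by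
          congr 1; funext k; exact hk k
  exact (key (out o) (fun j : J => FA j.1 o (fun k => a k j))).unique
    (key (out o) (fun j : J => FA j.1 o (fun k => a k j))).exists.choose_spec htarget
end
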